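/- Let s, t ∈ ℤ and define the sequence U : ℕ → ℤ by U_0 = 0, U_1 = 1, and U_{n+2} = s·U_{n+1} + t·U_n. Assume U_n ≠ 0 for all n ≥ 1. Then for all integers 0 ≤ k ≤ n, the product U_k! · U_{n−k}! divides U_n! in ℤ; equivalently, every U-binomial coefficient C_U(n, k) = U_n! / (U_k! · U_{n−k}!) is an integer. -/

import Mathlib

/-!
Lucas sequences satisfy the addition formula `U (a + b + 2) = U (a + 2) * U (b + 1) + t * U (a + 1) * U b`,
so `U (a + b)` is an integral combination of `U a` and `U b`. For any such sequence,
`zfact U a * zfact U b ∣ zfact U (a + b)` follows by induction on `a + b`: peeling off the top factor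
`U (a + b)` and splitting it along that combination reduces the claim to the pairs `(a - 1, b)` and `(a, b - 1)`,
exactly as in Pascal's rule.
-/

/-- The `U`-factorial over the integers:
`zfact U 0 = 1`, `zfact U n = U n * U (n-1) * ... * U 1`. -/
def zfact (U : ℕ → ℤ) : ℕ → ℤ
  | 0 => 1
  | n + 1 => U (n + 1) * zfact U n

theorem lucas_add {R : Type*} [CommRing R] {s t : R} {U : ℕ → R} (hU0 : U 0 = 0) (hU1 : U 1 = 1)
    (hUrec : ∀ n, U (n + 2) = s * U (n + 1) + t * U n) (m n : ℕ) :
    U (m + n + 1) = U (m + 1) * U (n + 1) + t * U m * U n := by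
  induction m using Nat.twoStepInduction with
  | zero => simp [hU0, hU1]
  | one =>
    rw [add_comm 1 n, hUrec n, hUrec 0, hU0, hU1]
    ring
  | more m ih₁ ih₂ =>
    calc U (m + 2 + n + 1)
        = s * U (m + 1 + n + 1) + t * U (m + n + 1) := by
          rw [show m + 2 + n + 1 = m + n + 1 + 2 by omega, hUrec]; ring_nf
      _ = U (m + 2 + 1) * U (n + 1) + t * U (m + 2) * U n := by
          rw [ih₁, ih₂, hUrec (m + 1), hUrec m]; ring

theorem zfact_mul_zfact_dvd_zfact_add {U : ℕ → ℤ}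
    (hU : ∀ a b, ∃ x y, U (a + b + 2) = x * U (a + 1) + y * U (b + 1)) (a b : ℕ) :
    zfact U a * zfact U b ∣ zfact U (a + b) := by
  induction a generalizing b with
  | zero => simp [zfact]
  | succ a iha =>
    induction b with
    | zero => simp [zfact]
    | succ b ihb =>
      obtain ⟨x, y, hxy⟩ := hU a b
      have hleft : zfact U (a + 1) * zfact U (b + 1) ∣ U (a + 1) * zfact U (a + b + 1) := by
        rw [show zfact U (a + 1) = U (a + 1) * zfact U a from rfl, mul_assoc,
          show a + b + 1 = a + (b + 1) by omega]
        exact mul_dvd_mul_left _ (iha (b + 1))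
      have hright : zfact U (a + 1) * zfact U (b + 1) ∣ U (b + 1) * zfact U (a + b + 1) := by
        rw [show zfact U (b + 1) = U (b + 1) * zfact U b from rfl, mul_left_comm,
          show a + b + 1 = a + 1 + b by omega]
        exact mul_dvd_mul_left _ ihb
      rw [show a + 1 + (b + 1) = a + b + 1 + 1 by omega,
        show zfact U (a + b + 1 + 1) = U (a + b + 2) * zfact U (a + b + 1) from rfl, hxy,
        add_mul, mul_assoc, mul_assoc]
      exact dvd_add (hleft.mul_left x) (hright.mul_left y)

theorem stmt13_general (s t : ℤ) (U : ℕ → ℤ)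
    (hU0 : U 0 = 0) (hU1 : U 1 = 1)
    (hUrec : ∀ n, U (n + 2) = s * U (n + 1) + t * U n) :
    ∀ n k : ℕ, k ≤ n → zfact U k * zfact U (n - k) ∣ zfact U n := by
  have hcomb : ∀ a b, ∃ x y, U (a + b + 2) = x * U (a + 1) + y * U (b + 1) := fun a b =>
    ⟨t * U b, U (a + 2), by
      rw [show a + b + 2 = a + 1 + b + 1 by omega, lucas_add hU0 hU1 hUrec (a + 1) b]; ring⟩
  intro n k hk
  obtain ⟨m, rfl⟩ := Nat.exists_eq_add_of_le hk
  rw [Nat.add_sub_cancel_left]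
  exact zfact_mul_zfact_dvd_zfact_add hcomb k m

theorem stmt13 (s t : ℤ) (U : ℕ → ℤ)
    (hU0 : U 0 = 0) (hU1 : U 1 = 1)
    (hUrec : ∀ n, U (n + 2) = s * U (n + 1) + t * U n)
    (hUne : ∀ n, 1 ≤ n → U n ≠ 0) :
    ∀ n k : ℕ, k ≤ n → zfact U k * zfact U (n - k) ∣ zfact U n :=
  stmt13_general s t U hU0 hU1 hUrec
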